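/- Let ν ≥ 0 and x > 0, and define the Amos bound Γ_ν(x) = x / (√(x² + (ν + 3/2)²) + ν + 1/2). If Γ_{ν+1}^{2ν+1}(x) · (2(ν+1)/x + Γ_{ν+1}(x))^{2ν+3} > 1, then Ψ_ν^{2ν+3}(x) < Ψ_{ν+1}^{2ν+1}(x), where Ψ_ν(x) = I_{ν+1}(x)/I_ν(x); equivalently, under this hypothesis the Turán type inequality I_{ν+1}^{4ν+4}(x) < I_{ν+2}^{2ν+1}(x) · I_ν^{2ν+3}(x) holds. -/

import Mathlib

/-!
Write `I_ν(x) = (x/2)^ν S_ν(x²/4)` with an entire power series `S_ν`. The Cauchy product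
`S_a S_b` has the closed-form coefficients `Γ(2n+a+b+1) / (n! Γ(n+a+1) Γ(n+b+1) Γ(n+a+b+1))`
(a Vandermonde-type identity), and comparing coefficients gives
`x Ψ_ν² + (2ν+1) Ψ_ν < x`. Together with the recurrence `1/Ψ_ν = 2(ν+1)/x + Ψ_{ν+1}` this
bounds `Ψ_{ν+1}` by the positive root of a quadratic, which is the Amos bound `Γ_ν < Ψ_ν`.
Applied at `ν + 1`, it turns the hypothesis into `Ψ_{ν+1}^{2ν+1} Ψ_ν^{-(2ν+3)} > 1`, which is the
first claim; the second is the same inequality with the quotients cleared.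
-/
open Real Filter Topology

/-- The modified Bessel function of the first kind of real order `ν`. -/
noncomputable def besselI (ν x : ℝ) : ℝ :=
  ∑' m : ℕ, (x / 2) ^ (2 * (m : ℝ) + ν) / ((m.factorial : ℝ) * Real.Gamma ((m : ℝ) + ν + 1))

/-- `Ψ_ν(x) = I_{ν+1}(x) / I_ν(x)`. -/
noncomputable def psi (ν x : ℝ) : ℝ := besselI (ν + 1) x / besselI ν x

/-- The Amos lower bound `Γ_ν(x) = x / (√(x² + (ν + 3/2)²) + ν + 1/2)`. -/
noncomputable def amosGamma (ν x : ℝ) : ℝ :=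
  x / (Real.sqrt (x ^ 2 + (ν + 3 / 2) ^ 2) + ν + 1 / 2)

open Finset Nat

theorem rpow_add_lt_mul_rpow_of_div_rpow_lt {a b c p q : ℝ} (ha : 0 < a) (hb : 0 < b) (hc : 0 ≤ c)
    (h : (b / a) ^ q < (c / b) ^ p) : b ^ (p + q) < c ^ p * a ^ q := by
  rw [div_rpow hb.le ha.le, div_rpow hc hb.le,
    div_lt_div_iff₀ (rpow_pos_of_pos ha q) (rpow_pos_of_pos hb p)] at h
  rwa [rpow_add hb, mul_comm]

noncomputable def besselCoeff (ν : ℝ) (m : ℕ) : ℝ := ((m ! : ℝ) * Gamma (m + ν + 1))⁻¹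

noncomputable def besselSeries (ν y : ℝ) : ℝ := ∑' m : ℕ, besselCoeff ν m * y ^ m

section Coeff

variable {ν : ℝ}

theorem besselCoeff_pos (hν : 0 ≤ ν) (m : ℕ) : 0 < besselCoeff ν m := by
  have : 0 < Gamma (m + ν + 1) := Gamma_pos_of_pos (by positivity)
  unfold besselCoeff
  positivity

theorem besselCoeff_eq_mul_besselCoeff_add_one (hν : 0 ≤ ν) (m : ℕ) :
    besselCoeff ν m = (m + ν + 1) * besselCoeff (ν + 1) m := by
  have hpos : (0 : ℝ) < m + ν + 1 := by positivity
  rw [besselCoeff, besselCoeff, ← add_assoc, Gamma_add_one hpos.ne']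
  field_simp

theorem succ_mul_besselCoeff_succ (ν : ℝ) (m : ℕ) :
    ((m : ℝ) + 1) * besselCoeff ν (m + 1) = besselCoeff (ν + 1) m := by
  rw [besselCoeff, besselCoeff, factorial_succ]
  push_cast
  rw [show (m : ℝ) + 1 + ν + 1 = m + (ν + 1) + 1 by ring]
  field_simp

theorem besselCoeff_succ (hν : 0 ≤ ν) (m : ℕ) :
    besselCoeff ν (m + 1) = besselCoeff ν m / ((m + 1) * (m + ν + 1)) := by
  rw [besselCoeff_eq_mul_besselCoeff_add_one hν m, ← succ_mul_besselCoeff_succ ν m]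
  field_simp

theorem summable_besselCoeff_mul_pow (hν : 0 ≤ ν) (y : ℝ) :
    Summable fun m ↦ besselCoeff ν m * y ^ m := by
  refine summable_of_ratio_norm_eventually_le (r := 1 / 2) (by norm_num) ?_
  filter_upwards [eventually_ge_atTop ⌈2 * |y|⌉₊] with m hm
  have hm' : 2 * |y| ≤ m := (le_ceil _).trans (by exact_mod_cast hm)
  have hd : (0 : ℝ) < (m + 1) * (m + ν + 1) := by positivity
  have hratio : ‖y / ((m + 1) * (m + ν + 1))‖ ≤ 1 / 2 := by
    rw [norm_div, Real.norm_eq_abs, Real.norm_of_nonneg hd.le, div_le_iff₀ hd]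
    nlinarith [abs_nonneg y]
  calc ‖besselCoeff ν (m + 1) * y ^ (m + 1)‖
      = ‖besselCoeff ν m * y ^ m‖ * ‖y / ((m + 1) * (m + ν + 1))‖ := by
        rw [besselCoeff_succ hν, ← norm_mul, pow_succ]
        ring_nf
    _ ≤ 1 / 2 * ‖besselCoeff ν m * y ^ m‖ := by
        rw [mul_comm]
        exact mul_le_mul_of_nonneg_right hratio (norm_nonneg _)

theorem summable_norm_besselCoeff_mul_pow (hν : 0 ≤ ν) (y : ℝ) :
    Summable fun m ↦ ‖besselCoeff ν m * y ^ m‖ := by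
  refine (summable_besselCoeff_mul_pow hν |y|).congr fun m ↦ ?_
  simp only [norm_mul, norm_pow, Real.norm_eq_abs, abs_of_pos (besselCoeff_pos hν m)]

theorem besselSeries_pos (hν : 0 ≤ ν) {y : ℝ} (hy : 0 ≤ y) : 0 < besselSeries ν y :=
  (summable_besselCoeff_mul_pow hν y).tsum_pos
    (fun m ↦ mul_nonneg (besselCoeff_pos hν m).le (pow_nonneg hy m)) 0
    (by simpa using besselCoeff_pos hν 0)

theorem besselSeries_eq_add (hν : 0 ≤ ν) (y : ℝ) :
    besselSeries ν y = (ν + 1) * besselSeries (ν + 1) y + y * besselSeries (ν + 2) y := by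
  have hs := summable_besselCoeff_mul_pow (by linarith : 0 ≤ ν + 1) y
  have hshifted_eq : ∀ m : ℕ, ((m + 1 : ℕ) : ℝ) * besselCoeff (ν + 1) (m + 1) * y ^ (m + 1) =
      y * (besselCoeff (ν + 2) m * y ^ m) := fun m ↦ by
    rw [Nat.cast_succ, succ_mul_besselCoeff_succ, add_assoc, one_add_one_eq_two, pow_succ]
    ring
  have hshifted :
      Summable fun m : ℕ ↦ ((m + 1 : ℕ) : ℝ) * besselCoeff (ν + 1) (m + 1) * y ^ (m + 1) := by
    simpa only [hshifted_eq] using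
      (summable_besselCoeff_mul_pow (by linarith : 0 ≤ ν + 2) y).mul_left y
  have hshift : ∑' m : ℕ, m * besselCoeff (ν + 1) m * y ^ m = y * besselSeries (ν + 2) y := by
    rw [tsum_eq_zero_add' (f := fun m : ℕ ↦ (m : ℝ) * besselCoeff (ν + 1) m * y ^ m) hshifted]
    simp only [hshifted_eq, tsum_mul_left, Nat.cast_zero, zero_mul, zero_add, besselSeries]
  have hsplit : ∀ m : ℕ, besselCoeff ν m * y ^ m =
      (ν + 1) * (besselCoeff (ν + 1) m * y ^ m) + m * besselCoeff (ν + 1) m * y ^ m :=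
    fun m ↦ by rw [besselCoeff_eq_mul_besselCoeff_add_one hν]; ring
  have hs' : Summable fun m : ℕ ↦ (m : ℝ) * besselCoeff (ν + 1) m * y ^ m :=
    (summable_nat_add_iff (f := fun m : ℕ ↦ (m : ℝ) * besselCoeff (ν + 1) m * y ^ m) 1).mp hshifted
  rw [← hshift, besselSeries, tsum_congr hsplit, (hs.mul_left _).tsum_add hs', tsum_mul_left,
    besselSeries]

end Coeff

noncomputable def besselProductCoeff (a b : ℝ) (n : ℕ) : ℝ :=
  Gamma (2 * n + a + b + 1) /
    ((n ! : ℝ) * Gamma (n + a + 1) * Gamma (n + b + 1) * Gamma (n + a + b + 1))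

section Product

variable {a b : ℝ}

theorem besselProductCoeff_pos (ha : 0 ≤ a) (hb : 0 ≤ b) (n : ℕ) :
    0 < besselProductCoeff a b n := by
  have h₁ : 0 < Gamma (2 * n + a + b + 1) := Gamma_pos_of_pos (by positivity)
  have h₂ : 0 < Gamma (n + a + 1) := Gamma_pos_of_pos (by positivity)
  have h₃ : 0 < Gamma (n + b + 1) := Gamma_pos_of_pos (by positivity)
  have h₄ : 0 < Gamma (n + a + b + 1) := Gamma_pos_of_pos (by positivity)
  unfold besselProductCoeff
  positivity

theorem besselProductCoeff_add_one_left_add_add_one_right (ha : 0 ≤ a) (hb : 0 ≤ b) (n : ℕ) :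
    besselProductCoeff (a + 1) b n + besselProductCoeff a (b + 1) n =
      (n + 1) * besselProductCoeff a b (n + 1) := by
  have hΓ (u : ℝ) (hu : 0 < u) : Gamma (u + 1) = u * Gamma u := Gamma_add_one hu.ne'
  have g₂ : 0 < Gamma (n + a + 1) := Gamma_pos_of_pos (by positivity)
  have g₃ : 0 < Gamma (n + b + 1) := Gamma_pos_of_pos (by positivity)
  have g₄ : 0 < Gamma (n + a + b + 2) := Gamma_pos_of_pos (by positivity)
  simp only [besselProductCoeff, factorial_succ]
  push_cast
  rw [show 2 * ((n : ℝ) + 1) + a + b + 1 = 2 * n + a + b + 2 + 1 by ring,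
    show 2 * (n : ℝ) + (a + 1) + b + 1 = 2 * n + a + b + 2 by ring,
    show 2 * (n : ℝ) + a + (b + 1) + 1 = 2 * n + a + b + 2 by ring,
    show (n : ℝ) + (a + 1) + 1 = n + a + 1 + 1 by ring,
    show (n : ℝ) + (b + 1) + 1 = n + b + 1 + 1 by ring,
    show (n : ℝ) + 1 + a + 1 = n + a + 1 + 1 by ring,
    show (n : ℝ) + 1 + b + 1 = n + b + 1 + 1 by ring,
    show (n : ℝ) + (a + 1) + b + 1 = n + a + b + 2 by ring,
    show (n : ℝ) + a + (b + 1) + 1 = n + a + b + 2 by ring,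
    show (n : ℝ) + 1 + a + b + 1 = n + a + b + 2 by ring,
    hΓ (2 * n + a + b + 2) (by positivity), hΓ (n + a + 1) (by positivity),
    hΓ (n + b + 1) (by positivity)]
  field_simp
  ring

theorem sum_antidiagonal_besselCoeff_mul (ha : 0 ≤ a) (hb : 0 ≤ b) (n : ℕ) :
    ∑ p ∈ antidiagonal n, besselCoeff a p.1 * besselCoeff b p.2 = besselProductCoeff a b n := by
  induction n generalizing a b with
  | zero =>
    have g₁ : 0 < Gamma (a + 1) := Gamma_pos_of_pos (by positivity)
    have g₂ : 0 < Gamma (b + 1) := Gamma_pos_of_pos (by positivity)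
    have g₃ : 0 < Gamma (a + b + 1) := Gamma_pos_of_pos (by positivity)
    simp only [antidiagonal_zero, sum_singleton, besselCoeff, besselProductCoeff]
    push_cast
    simp only [mul_zero, zero_add, factorial_zero, cast_one, one_mul]
    field_simp
  | succ n ih =>
    -- split the weight `n + 1 = i + j` and lower one index in each half
    have hsum : ((n : ℝ) + 1) * ∑ p ∈ antidiagonal (n + 1), besselCoeff a p.1 * besselCoeff b p.2 =
        besselProductCoeff (a + 1) b n + besselProductCoeff a (b + 1) n := by
      calc ((n : ℝ) + 1) * ∑ p ∈ antidiagonal (n + 1), besselCoeff a p.1 * besselCoeff b p.2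
          = ∑ p ∈ antidiagonal (n + 1), ((p.1 : ℝ) * besselCoeff a p.1 * besselCoeff b p.2 +
              besselCoeff a p.1 * ((p.2 : ℝ) * besselCoeff b p.2)) := by
            rw [mul_sum]
            refine sum_congr rfl fun p hp ↦ ?_
            have hp' : (p.1 : ℝ) + p.2 = n + 1 := by exact_mod_cast mem_antidiagonal.mp hp
            rw [← hp']
            ring
        _ = ∑ p ∈ antidiagonal n, besselCoeff (a + 1) p.1 * besselCoeff b p.2 +
              ∑ p ∈ antidiagonal n, besselCoeff a p.1 * besselCoeff (b + 1) p.2 := by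
            rw [sum_add_distrib, sum_antidiagonal_succ, sum_antidiagonal_succ']
            simp only [cast_zero, zero_mul, mul_zero, zero_add, cast_succ,
              succ_mul_besselCoeff_succ]
        _ = besselProductCoeff (a + 1) b n + besselProductCoeff a (b + 1) n := by
            rw [ih (by linarith) hb, ih ha (by linarith)]
    have hn : ((n : ℝ) + 1) ≠ 0 := by positivity
    apply mul_left_cancel₀ hn
    rw [hsum, besselProductCoeff_add_one_left_add_add_one_right ha hb]

theorem hasSum_besselSeries_mul (ha : 0 ≤ a) (hb : 0 ≤ b) (y : ℝ) :
    HasSum (fun n ↦ besselProductCoeff a b n * y ^ n) (besselSeries a y * besselSeries b y) := by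
  have hf := summable_norm_besselCoeff_mul_pow ha y
  have hg := summable_norm_besselCoeff_mul_pow hb y
  have hterm : ∀ n, ∑ p ∈ antidiagonal n,
      besselCoeff a p.1 * y ^ p.1 * (besselCoeff b p.2 * y ^ p.2) = besselProductCoeff a b n * y ^ n := fun n ↦ by
    rw [← sum_antidiagonal_besselCoeff_mul ha hb, sum_mul]
    refine sum_congr rfl fun p hp ↦ ?_
    rw [← mem_antidiagonal.mp hp, pow_add]
    ring
  have hsum := (summable_norm_sum_mul_antidiagonal_of_summable_norm hf hg).of_norm
  rw [besselSeries, besselSeries, tsum_mul_tsum_eq_tsum_sum_antidiagonal_of_summable_norm hf hg]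
  simpa only [hterm] using hsum.hasSum

end Product

section Quadratic

variable {μ : ℝ}

theorem two_mul_besselProductCoeff_self_zero (hμ : 0 ≤ μ) :
    2 * besselProductCoeff μ μ 0 = (2 * μ + 2) * besselProductCoeff μ (μ + 1) 0 := by
  have g₁ : 0 < Gamma (μ + 1) := Gamma_pos_of_pos (by positivity)
  have g₂ : 0 < Gamma (2 * μ + 1) := Gamma_pos_of_pos (by positivity)
  simp only [besselProductCoeff, cast_zero, mul_zero, zero_add, factorial_zero, cast_one, one_mul]
  rw [show μ + μ + 1 = 2 * μ + 1 by ring, show μ + (μ + 1) + 1 = 2 * μ + 1 + 1 by ring,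
    Gamma_add_one (by positivity : (2 * μ + 1) ≠ 0), Gamma_add_one (by positivity : (μ + 1) ≠ 0)]
  field_simp

theorem besselProductCoeff_succ_le (hμ : 0 ≤ μ) (n : ℕ) :
    2 * besselProductCoeff (μ + 1) (μ + 1) n + (2 * μ + 1) * besselProductCoeff μ (μ + 1) (n + 1) ≤
      2 * besselProductCoeff μ μ (n + 1) := by
  have hΓ (u : ℝ) (hu : 0 < u) : Gamma (u + 1) = u * Gamma u := Gamma_add_one hu.ne'
  have g₁ : 0 < Gamma (2 * n + 2 * μ + 3) := Gamma_pos_of_pos (by positivity)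
  have g₂ : 0 < Gamma (n + μ + 2) := Gamma_pos_of_pos (by positivity)
  have g₃ : 0 < Gamma (n + 2 * μ + 2) := Gamma_pos_of_pos (by positivity)
  have hgap : 2 * besselProductCoeff μ μ (n + 1) - 2 * besselProductCoeff (μ + 1) (μ + 1) n -
      (2 * μ + 1) * besselProductCoeff μ (μ + 1) (n + 1) =
      (2 * μ + 1) / (2 * n + 2 * μ + 3) * besselProductCoeff μ (μ + 1) (n + 1) := by
    simp only [besselProductCoeff, factorial_succ]
    push_cast
    rw [show 2 * ((n : ℝ) + 1) + μ + μ + 1 = 2 * n + 2 * μ + 3 by ring,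
      show 2 * (n : ℝ) + (μ + 1) + (μ + 1) + 1 = 2 * n + 2 * μ + 3 by ring,
      show 2 * ((n : ℝ) + 1) + μ + (μ + 1) + 1 = 2 * n + 2 * μ + 3 + 1 by ring,
      show (n : ℝ) + 1 + μ + 1 = n + μ + 2 by ring, show (n : ℝ) + (μ + 1) + 1 = n + μ + 2 by ring,
      show (n : ℝ) + 1 + (μ + 1) + 1 = n + μ + 2 + 1 by ring,
      show (n : ℝ) + 1 + μ + μ + 1 = n + 2 * μ + 2 by ring,
      show (n : ℝ) + (μ + 1) + (μ + 1) + 1 = n + 2 * μ + 2 + 1 by ring,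
      show (n : ℝ) + 1 + μ + (μ + 1) + 1 = n + 2 * μ + 2 + 1 by ring,
      hΓ (2 * n + 2 * μ + 3) (by positivity), hΓ (n + μ + 2) (by positivity),
      hΓ (n + 2 * μ + 2) (by positivity)]
    field_simp
    ring
  have hpos := besselProductCoeff_pos hμ (by linarith : 0 ≤ μ + 1) (n + 1)
  have : 0 ≤ (2 * μ + 1) / (2 * n + 2 * μ + 3) * besselProductCoeff μ (μ + 1) (n + 1) := by
    positivity
  linarith

theorem besselSeries_quadratic_lt {y : ℝ} (hμ : 0 ≤ μ) (hy : 0 ≤ y) :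
    2 * y * besselSeries (μ + 1) y ^ 2 + (2 * μ + 1) * besselSeries μ y * besselSeries (μ + 1) y <
      2 * besselSeries μ y ^ 2 := by
  have hμ1 : 0 ≤ μ + 1 := by linarith
  have hA := (hasSum_nat_add_iff' 1).mpr (hasSum_besselSeries_mul hμ hμ y)
  have hB := (hasSum_nat_add_iff' 1).mpr (hasSum_besselSeries_mul hμ hμ1 y)
  have hC := hasSum_besselSeries_mul hμ1 hμ1 y
  simp only [sum_range_one, pow_zero, mul_one] at hA hB
  have htail := hasSum_le (fun n ↦ ?_) ((hC.mul_left (2 * y)).add (hB.mul_left (2 * μ + 1)))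
    (hA.mul_left 2)
  · have hhead : (2 * μ + 1) * besselProductCoeff μ (μ + 1) 0 < 2 * besselProductCoeff μ μ 0 := by
      rw [two_mul_besselProductCoeff_self_zero hμ]
      nlinarith [besselProductCoeff_pos hμ hμ1 0]
    rw [sq, sq]
    linarith
  · calc 2 * y * (besselProductCoeff (μ + 1) (μ + 1) n * y ^ n) +
          (2 * μ + 1) * (besselProductCoeff μ (μ + 1) (n + 1) * y ^ (n + 1))
        = (2 * besselProductCoeff (μ + 1) (μ + 1) n +
            (2 * μ + 1) * besselProductCoeff μ (μ + 1) (n + 1)) * y ^ (n + 1) := by ring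
      _ ≤ 2 * besselProductCoeff μ μ (n + 1) * y ^ (n + 1) :=
        mul_le_mul_of_nonneg_right (besselProductCoeff_succ_le hμ n) (by positivity)
      _ = 2 * (besselProductCoeff μ μ (n + 1) * y ^ (n + 1)) := by ring

end Quadratic

section Bessel

variable {ν x : ℝ}

theorem besselI_eq_rpow_mul_besselSeries (ν : ℝ) (hx : 0 < x) :
    besselI ν x = (x / 2) ^ ν * besselSeries ν ((x / 2) ^ 2) := by
  have hx2 : 0 < x / 2 := by positivity
  rw [besselI, besselSeries, ← tsum_mul_left]
  refine tsum_congr fun m ↦ ?_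
  rw [add_comm, rpow_add hx2, show 2 * (m : ℝ) = (2 * m : ℕ) by push_cast; ring, rpow_natCast,
    pow_mul, besselCoeff, div_eq_mul_inv]
  ring

theorem besselI_pos (hν : 0 ≤ ν) (hx : 0 < x) : 0 < besselI ν x := by
  rw [besselI_eq_rpow_mul_besselSeries ν hx]
  exact mul_pos (rpow_pos_of_pos (by positivity) ν) (besselSeries_pos hν (by positivity))

theorem psi_pos (hν : 0 ≤ ν) (hx : 0 < x) : 0 < psi ν x :=
  div_pos (besselI_pos (by linarith) hx) (besselI_pos hν hx)

theorem psi_eq_mul_div_besselSeries (hν : 0 ≤ ν) (hx : 0 < x) :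
    psi ν x = x / 2 * besselSeries (ν + 1) ((x / 2) ^ 2) / besselSeries ν ((x / 2) ^ 2) := by
  have hx2 : 0 < x / 2 := by positivity
  have := rpow_pos_of_pos hx2 ν
  have := besselSeries_pos hν (by positivity : 0 ≤ (x / 2) ^ 2)
  rw [psi, besselI_eq_rpow_mul_besselSeries _ hx, besselI_eq_rpow_mul_besselSeries _ hx,
    rpow_add_one hx2.ne']
  field_simp

theorem besselI_eq_add (hν : 0 ≤ ν) (hx : 0 < x) :
    besselI ν x = 2 * (ν + 1) / x * besselI (ν + 1) x + besselI (ν + 2) x := by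
  have hx2 : 0 < x / 2 := by positivity
  rw [besselI_eq_rpow_mul_besselSeries _ hx, besselI_eq_rpow_mul_besselSeries _ hx,
    besselI_eq_rpow_mul_besselSeries _ hx, rpow_add_one hx2.ne', rpow_add hx2, rpow_two,
    besselSeries_eq_add hν]
  field_simp

theorem inv_psi (hν : 0 ≤ ν) (hx : 0 < x) : (psi ν x)⁻¹ = 2 * (ν + 1) / x + psi (ν + 1) x := by
  have := besselI_pos (by linarith : 0 ≤ ν + 1) hx
  rw [psi, psi, inv_div, besselI_eq_add hν hx, add_assoc, one_add_one_eq_two]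
  field_simp

theorem psi_quadratic_lt (hν : 0 ≤ ν) (hx : 0 < x) :
    x * psi ν x ^ 2 + (2 * ν + 1) * psi ν x < x := by
  have hq := besselSeries_quadratic_lt hν (by positivity : 0 ≤ (x / 2) ^ 2)
  have := besselSeries_pos hν (by positivity : 0 ≤ (x / 2) ^ 2)
  rw [psi_eq_mul_div_besselSeries hν hx, div_pow, mul_pow]
  set S₀ := besselSeries ν ((x / 2) ^ 2)
  set S₁ := besselSeries (ν + 1) ((x / 2) ^ 2)
  rw [← sub_pos]
  field_simp
  linarith [mul_pos hx (sub_pos.2 hq)]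

end Bessel

theorem amosGamma_lt_psi {ν x : ℝ} (hν : 0 ≤ ν) (hx : 0 < x) : amosGamma ν x < psi ν x := by
  have hquad := psi_quadratic_lt (by linarith : 0 ≤ ν + 1) hx
  -- `psi (ν + 1) x` lies below the positive root of `x t ^ 2 + (2ν + 3) t - x`
  have hroot : x * psi (ν + 1) x + (ν + 3 / 2) < √(x ^ 2 + (ν + 3 / 2) ^ 2) := by
    refine lt_sqrt_of_sq_lt ?_
    nlinarith [mul_lt_mul_of_pos_left hquad hx]
  have hinv : (psi ν x)⁻¹ < (amosGamma ν x)⁻¹ := by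
    rw [inv_psi hν hx, amosGamma, inv_div, lt_div_iff₀ hx, add_mul, div_mul_cancel₀ _ hx.ne']
    linarith
  exact (inv_lt_inv₀ (psi_pos hν hx) (div_pos hx (by positivity))).1 hinv

theorem stmt_19 (ν x : ℝ) (hν : 0 ≤ ν) (hx : 0 < x)
    (hyp : 1 < (amosGamma (ν + 1) x) ^ (2 * ν + 1) *
        (2 * (ν + 1) / x + amosGamma (ν + 1) x) ^ (2 * ν + 3)) :
    (psi ν x) ^ (2 * ν + 3) < (psi (ν + 1) x) ^ (2 * ν + 1) ∧
    (besselI (ν + 1) x) ^ (4 * ν + 4) <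
      (besselI (ν + 2) x) ^ (2 * ν + 1) * (besselI ν x) ^ (2 * ν + 3) := by
  have hν1 : 0 ≤ ν + 1 := by linarith
  have hP := psi_pos hν hx
  have hQ := psi_pos hν1 hx
  have hG : 0 < amosGamma (ν + 1) x := div_pos hx (by positivity)
  have hGQ := amosGamma_lt_psi hν1 hx
  have hψ : psi ν x ^ (2 * ν + 3) < psi (ν + 1) x ^ (2 * ν + 1) := by
    have h : 1 < psi (ν + 1) x ^ (2 * ν + 1) * (psi ν x)⁻¹ ^ (2 * ν + 3) := by
      refine hyp.trans_le ?_
      rw [inv_psi hν hx]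
      gcongr
    rwa [inv_rpow hP.le, ← div_eq_mul_inv, one_lt_div (rpow_pos_of_pos hP _)] at h
  refine ⟨hψ, ?_⟩
  rw [psi, psi, add_assoc, one_add_one_eq_two] at hψ
  rw [show 4 * ν + 4 = (2 * ν + 1) + (2 * ν + 3) by ring]
  exact rpow_add_lt_mul_rpow_of_div_rpow_lt (besselI_pos hν hx) (besselI_pos hν1 hx)
    (besselI_pos (by linarith) hx).le hψ
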